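/- arXiv:1909.06406 — 4 statements merged into one kernel-verified Lean document; each statement's English description precedes it below -/
import Mathlib

section
/- For y ∈ R, α ≥ 0, γ ∈ (0,∞)^n, the measure μ on R^n with density (y - γ·x)_+^α with respect to Lebesgue measure satisfies T_μ(x) = (y - γ·x)_+^{α+n} / ∏_{i=1}^n ((α+i)γ_i) for all x ∈ R^n, where T_μ(x) := μ(∏_{i=1}^n (x_i,∞)) and u_+ := max(0,u). -/
/-!
Peel off the last coordinate. By Fubini, integrating over a half-line in one variable raises the
exponent by one and divides by (exponent + 1) times the slope:
`∫_{t > a} (c - g t)₊^β dt = (c - g a)₊^{β+1} / ((β + 1) g)`.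
Induction on `n` then produces the exponent `α + n` and the product of the factors `(α + i) γᵢ`.
-/

open MeasureTheory Finset Set
open scoped ENNReal

/-- `u₊ ^ β` with the convention `0 ^ 0 = 0`; unlike `max 0 u ^ β` it vanishes on `u ≤ 0` also
for `β = 0`. -/
noncomputable def posRpow (β u : ℝ) : ℝ := if 0 < u then u ^ β else 0

section posRpow

variable {β u : ℝ}

theorem posRpow_of_pos (h : 0 < u) : posRpow β u = u ^ β := if_pos h

theorem posRpow_of_nonpos (h : u ≤ 0) : posRpow β u = 0 := if_neg h.not_gt

theorem posRpow_eq_max_rpow (hβ : 0 < β) : posRpow β u = max 0 u ^ β := by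
  rcases le_or_gt u 0 with h | h
  · rw [posRpow_of_nonpos h, max_eq_left h, Real.zero_rpow hβ.ne']
  · rw [posRpow_of_pos h, max_eq_right h.le]

@[fun_prop]
theorem measurable_posRpow : Measurable (posRpow β) :=
  Measurable.ite measurableSet_Ioi (by fun_prop) measurable_const

end posRpow

theorem lintegral_Ioi_posRpow_sub_mul {β g : ℝ} (hβ : -1 < β) (hg : 0 < g) (c a : ℝ) :
    ∫⁻ t in Ioi a, ENNReal.ofReal (posRpow β (c - g * t))
      = ENNReal.ofReal (posRpow (β + 1) (c - g * a) / ((β + 1) * g)) := by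
  rcases le_or_gt (c - g * a) 0 with hca | hca
  · rw [posRpow_of_nonpos hca, zero_div, ENNReal.ofReal_zero]
    refine setLIntegral_eq_zero measurableSet_Ioi fun t (ht : a < t) => ?_
    rw [posRpow_of_nonpos (by nlinarith), ENNReal.ofReal_zero, Pi.zero_apply]
  set b := c / g
  have hb : c - g * b = 0 := by rw [mul_div_cancel₀ c hg.ne', sub_self]
  have hab : a < b := by
    by_contra! h
    nlinarith
  have hvanish : EqOn (fun t => ENNReal.ofReal (posRpow β (c - g * t))) 0 (Ici b) :=
    fun t (ht : b ≤ t) => by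
      dsimp only
      rw [posRpow_of_nonpos (by nlinarith), ENNReal.ofReal_zero, Pi.zero_apply]
  have hpos : EqOn (fun t => ENNReal.ofReal (posRpow β (c - g * t)))
      (fun t => ENNReal.ofReal ((c - g * t) ^ β)) (Ioo a b) :=
    fun t ht => by dsimp only; rw [posRpow_of_pos (by nlinarith [ht.2])]
  have hint : IntegrableOn (fun t => (c - g * t) ^ β) (Ioo a b) := by
    have := (((intervalIntegral.intervalIntegrable_rpow' hβ (a := c - g * a)
      (b := c - g * b)).comp_sub_left c).comp_mul_left (c := g))
    simp only [sub_sub_cancel, mul_div_cancel_left₀ _ hg.ne'] at this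
    exact ((intervalIntegrable_iff_integrableOn_Ioc_of_le hab.le).mp this).mono_set
      Set.Ioo_subset_Ioc_self
  have hnonneg : 0 ≤ᵐ[volume.restrict (Ioo a b)] fun t => (c - g * t) ^ β := by
    filter_upwards [ae_restrict_mem measurableSet_Ioo] with t ht
    exact Real.rpow_nonneg (by nlinarith [ht.2]) β
  calc ∫⁻ t in Ioi a, ENNReal.ofReal (posRpow β (c - g * t))
      = ∫⁻ t in Ioo a b, ENNReal.ofReal ((c - g * t) ^ β) := by
        rw [← Ioo_union_Ici_eq_Ioi hab, lintegral_union measurableSet_Ici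
            ((Iio_disjoint_Ici le_rfl).mono_left Set.Ioo_subset_Iio_self),
          setLIntegral_eq_zero measurableSet_Ici hvanish, add_zero,
          setLIntegral_congr_fun measurableSet_Ioo hpos]
    _ = ENNReal.ofReal (∫ t in a..b, (c - g * t) ^ β) := by
        rw [intervalIntegral.integral_of_le hab.le, integral_Ioc_eq_integral_Ioo,
          ofReal_integral_eq_lintegral_ofReal hint hnonneg]
    _ = ENNReal.ofReal (g⁻¹ * ((c - g * a) ^ (β + 1) / (β + 1))) := by
        rw [intervalIntegral.integral_comp_sub_mul (fun s => s ^ β) hg.ne', hb,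
          integral_rpow (Or.inl hβ), Real.zero_rpow (by linarith), sub_zero, smul_eq_mul]
    _ = ENNReal.ofReal (posRpow (β + 1) (c - g * a) / ((β + 1) * g)) := by
        rw [posRpow_of_pos hca]
        congr 1
        field_simp

theorem lintegral_pi_eq_lintegral_lintegral_snoc {X : Type*} [MeasurableSpace X] {n : ℕ}
    (μ : Fin (n + 1) → Measure X) [∀ i, SigmaFinite (μ i)] {f : (Fin (n + 1) → X) → ℝ≥0∞}
    (hf : Measurable f) :
    ∫⁻ z, f z ∂Measure.pi μ
      = ∫⁻ t, ∫⁻ w, f (Fin.snoc w t) ∂Measure.pi (fun j => μ j.castSucc) ∂μ (Fin.last n) := by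
  let e := MeasurableEquiv.piFinSuccAbove (fun _ => X) (Fin.last n)
  rw [← (measurePreserving_piFinSuccAbove μ _).symm.lintegral_comp_emb e.symm.measurableEmbedding,
    lintegral_prod (fun p => f (e.symm p)) (hf.comp e.symm.measurable).aemeasurable]
  simp only [e, MeasurableEquiv.piFinSuccAbove_symm_apply, Fin.insertNthEquiv_last,
    Fin.succAbove_last]
  rfl

theorem lintegral_pi_restrict_Ioi_posRpow {α : ℝ} (hα : -1 < α) {n : ℕ} {γ : Fin n → ℝ}
    (hγ : ∀ i, 0 < γ i) (y : ℝ) (x : Fin n → ℝ) :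
    ∫⁻ z, ENNReal.ofReal (posRpow α (y - ∑ i, γ i * z i))
        ∂Measure.pi (fun i => volume.restrict (Ioi (x i)))
      = ENNReal.ofReal (posRpow (α + n) (y - ∑ i, γ i * x i)
          / ∏ i : Fin n, (α + ((i : ℕ) + 1)) * γ i) := by
  induction n generalizing y with
  | zero => simp
  | succ m ih =>
    set c := y - ∑ j : Fin m, γ j.castSucc * x j.castSucc
    set P := ∏ j : Fin m, (α + ((j : ℕ) + 1)) * γ j.castSucc
    have hP : 0 < P :=
      prod_pos fun j _ => mul_pos (by linarith [(j : ℕ).cast_nonneg (α := ℝ)]) (hγ _)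
    have hinner : ∀ t,
        ∫⁻ w, ENNReal.ofReal (posRpow α (y - ∑ i, γ i * (Fin.snoc w t : Fin (m + 1) → ℝ) i))
          ∂Measure.pi (fun j => volume.restrict (Ioi (x j.castSucc)))
        = ENNReal.ofReal P⁻¹ * ENNReal.ofReal (posRpow (α + m) (c - γ (Fin.last m) * t)) := by
      intro t
      have hsplit : ∀ w : Fin m → ℝ, y - ∑ i, γ i * (Fin.snoc w t : Fin (m + 1) → ℝ) i
          = (y - γ (Fin.last m) * t) - ∑ j, γ j.castSucc * w j := by
        intro w
        simp only [Fin.sum_univ_castSucc, Fin.snoc_castSucc, Fin.snoc_last]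
        ring
      simp_rw [hsplit]
      rw [ih (fun j => hγ j.castSucc), div_eq_inv_mul, ENNReal.ofReal_mul (inv_nonneg.2 hP.le)]
      congr 3
      ring
    rw [lintegral_pi_eq_lintegral_lintegral_snoc _ (by fun_prop)]
    simp_rw [hinner]
    rw [lintegral_const_mul _ (by fun_prop),
      lintegral_Ioi_posRpow_sub_mul (by linarith [m.cast_nonneg (α := ℝ)]) (hγ _),
      ← ENNReal.ofReal_mul (inv_nonneg.2 hP.le)]
    have hsum : y - ∑ i, γ i * x i = c - γ (Fin.last m) * x (Fin.last m) := by
      rw [Fin.sum_univ_castSucc]; ring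
    have hprod : ∏ i : Fin (m + 1), (α + ((i : ℕ) + 1)) * γ i
        = P * ((α + m + 1) * γ (Fin.last m)) := by
      rw [Fin.prod_univ_castSucc, Fin.val_last, add_assoc]
      rfl
    rw [hsum, hprod, Nat.cast_succ, ← add_assoc]
    congr 1
    field_simp

/-- For `y ∈ ℝ`, `α ≥ 0`, `γ ∈ (0,∞)ⁿ`, the measure on `ℝⁿ` with density
`(y - γ·x)₊^α` (with the convention `0^0 = 0`) has tail function
`T_μ(x) = (y - γ·x)₊^{α+n} / ∏ᵢ ((α+i) γᵢ)`. -/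
theorem tail_of_withDensity_pos_part_pow
    (n : ℕ) (hn : 1 ≤ n) (y : ℝ) (α : ℝ) (hα : 0 ≤ α) (γ : Fin n → ℝ) (hγ : ∀ i, 0 < γ i)
    (μ : Measure (Fin n → ℝ))
    (hμ : μ = (volume : Measure (Fin n → ℝ)).withDensity
        (fun x => ENNReal.ofReal
          (if 0 < y - ∑ i, γ i * x i then (y - ∑ i, γ i * x i) ^ α else 0))) :
    ∀ x : Fin n → ℝ,
      μ {z | ∀ i, x i < z i}
        = ENNReal.ofReal
            ((max 0 (y - ∑ i, γ i * x i)) ^ (α + n)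
              / ∏ i : Fin n, (α + ((i : ℕ) + 1)) * γ i) := by
  intro x
  have hbox : {z : Fin n → ℝ | ∀ i, x i < z i} = univ.pi fun i => Ioi (x i) := by
    ext z
    simp
  have hexp : 0 < α + n := by
    have : (1 : ℝ) ≤ n := by exact_mod_cast hn
    linarith
  rw [hbox, hμ, withDensity_apply _ (MeasurableSet.univ_pi fun _ => measurableSet_Ioi), volume_pi,
    Measure.restrict_pi_pi, ← posRpow_eq_max_rpow hexp]
  exact lintegral_pi_restrict_Ioi_posRpow (by linarith) hγ y x
end

section
/- Let G_1,...,G_n have joint density n! on {z_i > 0, Σ z_i < 1}. For j ∈ {0,...,n}, x ∈ (0,1), y ∈ (0,1], the probability p_{n,j}(x,y) := P(G_i ≤ x for all i ≤ j, G_i > x for all j < i ≤ n, Σ_{i=1}^n G_i < y) equals Σ_{r=0}^j (-1)^{j-r} C(j,r) (y - (n-r)x)_+^n. -/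
/-!
Pushing `P` forward, the probability is `n!` times the Lebesgue measure of the set of points `z` of
the open simplex `{z > 0, ∑ z < 1}` with `zᵢ ≤ x` for `i ≤ j`, `zᵢ > x` for `i > j` and
`∑ z < y`. Subtracting `x` from the last `n - j` coordinates maps it onto
`{z > 0, zᵢ ≤ x for i ≤ j, ∑ z < y - (n - j) x}`. Inclusion–exclusion over the coordinates
`i ≤ j` with `zᵢ > x`, each of which can again be shifted down by `x`, writes its volume as an
alternating sum of volumes of open simplices `{z > 0, ∑ z < s}`, and these are `s₊ⁿ / n!`.
-/

open MeasureTheory Finset Set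
open scoped ENNReal

def openSimplex (ι : Type*) [Fintype ι] (t : ℝ) : Set (ι → ℝ) :=
  {z | (∀ i, 0 < z i) ∧ ∑ i, z i < t}

section

variable {ι : Type*} [Fintype ι]

lemma measurableSet_openSimplex (t : ℝ) : MeasurableSet (openSimplex ι t) := by
  unfold openSimplex; measurability

lemma openSimplex_subset_Icc (t : ℝ) : openSimplex ι t ⊆ Icc 0 (fun _ => t) := by
  rintro z ⟨hpos, hsum⟩
  refine ⟨fun i => (hpos i).le, fun i => ?_⟩
  calc z i ≤ ∑ i, z i := single_le_sum (fun i _ => (hpos i).le) (mem_univ i)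
    _ ≤ t := hsum.le

lemma volume_openSimplex_lt_top (t : ℝ) : volume (openSimplex ι t) < ∞ :=
  (measure_mono (openSimplex_subset_Icc t)).trans_lt isCompact_Icc.measure_lt_top

def simplexCut (S T : Finset ι) (x t : ℝ) : Set (ι → ℝ) :=
  openSimplex ι t ∩ {z | (∀ i ∈ S, z i ≤ x) ∧ ∀ i ∈ T, x < z i}

lemma measurableSet_simplexCut (S T : Finset ι) (x t : ℝ) :
    MeasurableSet (simplexCut S T x t) := by
  unfold simplexCut openSimplex; measurability

lemma setOf_inter_openSimplex (S T : Finset ι) (x : ℝ) {y t : ℝ} (hyt : y ≤ t) :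
    {z : ι → ℝ | (∀ i ∈ S, z i ≤ x) ∧ (∀ i ∈ T, x < z i) ∧ ∑ i, z i < y} ∩ openSimplex ι t
      = simplexCut S T x y := by
  ext z
  simp only [simplexCut, openSimplex, mem_inter_iff, mem_ofPred_eq]
  constructor
  · rintro ⟨⟨hS, hT, hy⟩, hpos, -⟩
    exact ⟨⟨hpos, hy⟩, hS, hT⟩
  · rintro ⟨⟨hpos, hy⟩, hS, hT⟩
    exact ⟨⟨hS, hT, hy⟩, hpos, hy.trans_le hyt⟩

@[simp] lemma simplexCut_empty_empty (x t : ℝ) :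
    simplexCut (∅ : Finset ι) ∅ x t = openSimplex ι t := by
  simp [simplexCut]

lemma volume_simplexCut_ne_top (S T : Finset ι) (x t : ℝ) :
    volume (simplexCut S T x t) ≠ ∞ :=
  (measure_mono inter_subset_left).trans_lt (volume_openSimplex_lt_top t) |>.ne

variable [DecidableEq ι]

lemma simplexCut_insert_left (S T : Finset ι) (a : ι) (x t : ℝ) :
    simplexCut (insert a S) T x t = simplexCut S T x t \ simplexCut S (insert a T) x t := by
  ext z
  simp only [simplexCut, mem_inter_iff, mem_sdiff, mem_ofPred_eq, Finset.forall_mem_insert]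
  constructor
  · rintro ⟨hz, ⟨hza, hS⟩, hT⟩
    exact ⟨⟨hz, hS, hT⟩, fun h => (h.2.2.1.not_ge hza)⟩
  · rintro ⟨⟨hz, hS, hT⟩, h⟩
    exact ⟨hz, ⟨not_lt.mp fun hxa => h ⟨hz, hS, hxa, hT⟩, hS⟩, hT⟩

lemma simplexCut_eq_preimage_sub {S T : Finset ι} (hST : Disjoint S T) {x : ℝ} (hx : 0 ≤ x)
    (t : ℝ) : simplexCut S T x t
      = (· - fun i => if i ∈ T then x else 0) ⁻¹' simplexCut S ∅ x (t - #T * x) := by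
  have hsum (z : ι → ℝ) : ∑ i, (z i - if i ∈ T then x else 0) = ∑ i, z i - #T * x := by
    simp [Finset.sum_sub_distrib, Finset.sum_ite_mem]
  ext z
  simp only [simplexCut, openSimplex, mem_inter_iff, Set.mem_preimage, mem_ofPred_eq, hsum,
    Pi.sub_apply, Finset.notMem_empty, IsEmpty.forall_iff, implies_true, and_true]
  constructor
  · rintro ⟨⟨hpos, hsum⟩, hS, hT⟩
    refine ⟨⟨fun i => ?_, by linarith⟩, fun i hi => ?_⟩
    · split_ifs with hi
      · linarith [hT i hi]
      · linarith [hpos i]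
    · simpa [Finset.disjoint_left.mp hST hi] using hS i hi
  · rintro ⟨⟨hpos, hsum⟩, hS⟩
    have hT (i) (hi : i ∈ T) : x < z i := by simpa [hi] using hpos i
    refine ⟨⟨fun i => ?_, by linarith⟩, fun i hi => ?_, hT⟩
    · by_cases hi : i ∈ T
      · linarith [hT i hi]
      · simpa [hi] using hpos i
    · simpa [Finset.disjoint_left.mp hST hi] using hS i hi

lemma volume_simplexCut_eq {S T : Finset ι} (hST : Disjoint S T) {x : ℝ} (hx : 0 ≤ x)
    (t : ℝ) : volume (simplexCut S T x t) = volume (simplexCut S ∅ x (t - #T * x)) := by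
  rw [simplexCut_eq_preimage_sub hST hx]
  simp only [sub_eq_add_neg]
  exact measure_preimage_add_right _ _ _

lemma volume_simplexCut_insert_toReal {S : Finset ι} {a : ι} (ha : a ∉ S) {x : ℝ} (hx : 0 ≤ x)
    (t : ℝ) : (volume (simplexCut (insert a S) ∅ x t)).toReal
      = (volume (simplexCut S ∅ x t)).toReal - (volume (simplexCut S ∅ x (t - x))).toReal := by
  have hsub : simplexCut S {a} x t ⊆ simplexCut S ∅ x t :=
    fun z ⟨hz, hS, _⟩ => ⟨hz, hS, by simp⟩
  rw [simplexCut_insert_left, insert_empty_eq,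
    measure_sdiff hsub (measurableSet_simplexCut _ _ _ _).nullMeasurableSet
      (volume_simplexCut_ne_top _ _ _ _),
    ENNReal.toReal_sub_of_le (measure_mono hsub) (volume_simplexCut_ne_top _ _ _ _),
    volume_simplexCut_eq (disjoint_singleton_right.2 ha) hx, Finset.card_singleton, Nat.cast_one,
    one_mul]

lemma volume_simplexCut_toReal_eq_sum_powerset (S : Finset ι) {x : ℝ} (hx : 0 ≤ x) (t : ℝ) :
    (volume (simplexCut S ∅ x t)).toReal
      = ∑ U ∈ S.powerset, (-1) ^ #U * (volume (openSimplex ι (t - #U * x))).toReal := by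
  induction S using Finset.induction_on generalizing t with
  | empty => simp
  | insert a S ha ih =>
    rw [volume_simplexCut_insert_toReal ha hx, ih, ih, sum_powerset_insert ha, sub_eq_add_neg,
      ← sum_neg_distrib]
    congr 1
    refine sum_congr rfl fun U hU => ?_
    rw [card_insert_of_notMem (notMem_mono (mem_powerset.1 hU) ha)]
    push_cast
    ring_nf

end

lemma openSimplex_fin_succ (n : ℕ) (t : ℝ) :
    openSimplex (Fin (n + 1)) t = MeasurableEquiv.piFinSuccAbove (fun _ => ℝ) 0 ⁻¹'
      {p | 0 < p.1 ∧ p.2 ∈ openSimplex (Fin n) (t - p.1)} := by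
  ext z
  simp [openSimplex, Fin.forall_fin_succ, Fin.sum_univ_succ, Fin.tail, lt_sub_iff_add_lt',
    and_assoc]

lemma lintegral_Ioo_sub_pow_div_factorial (n : ℕ) {t : ℝ} (ht : 0 ≤ t) :
    ∫⁻ a in Ioo 0 t, ENNReal.ofReal ((t - a) ^ n / n.factorial)
      = ENNReal.ofReal (t ^ (n + 1) / (n + 1).factorial) := by
  rw [← ofReal_integral_eq_lintegral_ofReal]
  · congr 1
    rw [← integral_Ioc_eq_integral_Ioo, ← intervalIntegral.integral_of_le ht,
      intervalIntegral.integral_div, intervalIntegral.integral_comp_sub_left (fun u => u ^ n),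
      integral_pow, Nat.factorial_succ]
    push_cast
    field_simp
    ring
  · exact (Continuous.integrableOn_Icc (by fun_prop)).mono_set Ioo_subset_Icc_self
  · filter_upwards [self_mem_ae_restrict measurableSet_Ioo] with a ha
    have : 0 ≤ t - a := sub_nonneg.2 ha.2.le
    positivity

lemma volume_openSimplex (n : ℕ) (t : ℝ) :
    volume (openSimplex (Fin n) t)
      = if 0 < t then ENNReal.ofReal (t ^ n / n.factorial) else 0 := by
  induction n generalizing t with
  | zero =>
    by_cases ht : 0 < t <;> simp [openSimplex, ht, volume_pi]
  | succ n ih =>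
    have hA : MeasurableSet
        {p : ℝ × (Fin n → ℝ) | 0 < p.1 ∧ p.2 ∈ openSimplex (Fin n) (t - p.1)} := by
      unfold openSimplex; measurability
    have hslice (a : ℝ) : volume {w | 0 < a ∧ w ∈ openSimplex (Fin n) (t - a)}
        = (Ioo 0 t).indicator (fun a => ENNReal.ofReal ((t - a) ^ n / n.factorial)) a := by
      by_cases ha : 0 < a
      · by_cases hat : a < t
        · simp [ha, ih, hat, indicator_of_mem]
        · simp [ha, ih, hat]
      · simp [ha]
    rw [openSimplex_fin_succ, (volume_preserving_piFinSuccAbove (fun _ => ℝ) 0).measure_preimage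
      hA.nullMeasurableSet, Measure.volume_eq_prod, Measure.prod_apply hA]
    simp only [preimage_ofPred_eq, hslice, lintegral_indicator measurableSet_Ioo]
    split_ifs with ht
    · exact lintegral_Ioo_sub_pow_div_factorial n ht.le
    · simp [Ioo_eq_empty ht]

lemma volume_openSimplex_toReal {n : ℕ} (hn : n ≠ 0) (t : ℝ) :
    (volume (openSimplex (Fin n) t)).toReal = max 0 t ^ n / n.factorial := by
  rw [volume_openSimplex]
  split_ifs with ht
  · rw [ENNReal.toReal_ofReal (by positivity), max_eq_right ht.le]
  · rw [max_eq_left (not_lt.mp ht), zero_pow hn, zero_div, ENNReal.toReal_zero]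

lemma volume_simplexCut_toReal {n : ℕ} (hn : n ≠ 0) (S : Finset (Fin n)) {x : ℝ} (hx : 0 ≤ x)
    (t : ℝ) : (volume (simplexCut S ∅ x t)).toReal
      = ∑ k ∈ range (#S + 1), (-1) ^ k * (#S).choose k * max 0 (t - k * x) ^ n / n.factorial := by
  simp_rw [volume_simplexCut_toReal_eq_sum_powerset S hx, volume_openSimplex_toReal hn,
    mul_div_assoc,
    sum_powerset_apply_card (fun k => (-1 : ℝ) ^ k * (max 0 (t - k * x) ^ n / n.factorial)),
    nsmul_eq_mul]
  exact sum_congr rfl fun k _ => by ring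

lemma withDensity_ite_openSimplex_apply {n : ℕ} (c : ℝ≥0∞) (t : ℝ) (s : Set (Fin n → ℝ)) :
    (volume.withDensity fun z : Fin n → ℝ =>
      if (∀ i, 0 < z i) ∧ ∑ i, z i < t then c else 0) s
      = c * volume (s ∩ openSimplex (Fin n) t) := by
  have hind : (fun z : Fin n → ℝ => if (∀ i, 0 < z i) ∧ ∑ i, z i < t then c else 0)
      = (openSimplex (Fin n) t).indicator fun _ => c := by
    ext z
    simp only [indicator, openSimplex, mem_ofPred_eq]
    congr
  rw [hind, withDensity_apply' _ s, lintegral_indicator_const (measurableSet_openSimplex t),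
    Measure.restrict_apply (measurableSet_openSimplex t), Set.inter_comm]

lemma sum_Icc_one_eq_sum_fin {M : Type*} [AddCommMonoid M] (f : ℕ → M) (n : ℕ) :
    ∑ i ∈ Icc 1 n, f i = ∑ i : Fin n, f (i + 1) := by
  rw [Fin.sum_univ_eq_sum_range (fun i => f (i + 1)), range_eq_Ico, sum_Ico_add' f 0 n 1]
  rfl

lemma setOf_spacings_eq_preimage {Ω : Type*} (G : ℕ → Ω → ℝ) {n j : ℕ} (hj : j ≤ n)
    (x y : ℝ) :
    {ω | (∀ i, 1 ≤ i → i ≤ j → G i ω ≤ x) ∧ (∀ i, j < i → i ≤ n → x < G i ω)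
        ∧ ∑ i ∈ Icc 1 n, G i ω < y}
      = (fun ω (i : Fin n) => G (i + 1) ω) ⁻¹'
          {z | (∀ i ∈ ({i | (i : ℕ) < j} : Finset (Fin n)), z i ≤ x)
            ∧ (∀ i ∈ ({i | (i : ℕ) < j} : Finset (Fin n))ᶜ, x < z i) ∧ ∑ i, z i < y} := by
  ext ω
  simp only [mem_ofPred_eq, Set.mem_preimage, Finset.mem_compl, Finset.mem_filter,
    Finset.mem_univ, true_and, not_lt, sum_Icc_one_eq_sum_fin]
  refine and_congr ⟨fun h i hi => h _ (Nat.le_add_left 1 i) hi, fun h i h1 hij => ?_⟩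
    (and_congr_left' ⟨fun h i hi => h _ (by omega) (by omega), fun h i hji hin => ?_⟩)
  · simpa [Nat.sub_add_cancel h1] using h ⟨i - 1, by omega⟩ (by simp; omega)
  · simpa [Nat.sub_add_cancel (by omega : 1 ≤ i)] using h ⟨i - 1, by omega⟩ (by simp; omega)

theorem spacings_partial_probability_general
    {Ω : Type} [MeasurableSpace Ω] (P : Measure Ω)
    (n : ℕ) (hn : 1 ≤ n) (G : ℕ → Ω → ℝ)
    (hdens : Measure.map (fun ω => fun i : Fin n => G ((i : ℕ) + 1) ω) P
      = (volume : Measure (Fin n → ℝ)).withDensity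
          (fun z => if (∀ i, 0 < z i) ∧ ∑ i, z i < 1 then (Nat.factorial n : ℝ≥0∞) else 0))
    (j : ℕ) (hj : j ≤ n) (x : ℝ) (hx : x ∈ Set.Ioo (0 : ℝ) 1) (y : ℝ)
    (hy : y ∈ Set.Ioc (0 : ℝ) 1) :
    (P {ω | (∀ i, 1 ≤ i → i ≤ j → G i ω ≤ x) ∧ (∀ i, j < i → i ≤ n → x < G i ω)
        ∧ ∑ i ∈ Finset.Icc 1 n, G i ω < y}).toReal
      = ∑ r ∈ Finset.range (j + 1),
          (-1 : ℝ) ^ (j - r) * (Nat.choose j r) * (max 0 (y - ((n : ℝ) - r) * x)) ^ n := by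
  set S : Finset (Fin n) := {i | (i : ℕ) < j}
  have hS : #S = j := by simp [S, Fin.card_filter_val_lt, hj]
  have hmeas : AEMeasurable (fun ω (i : Fin n) => G (i + 1) ω) P := by
    refine .of_map_ne_zero fun h => ?_
    have := congrArg (· univ) (hdens.symm.trans h)
    rw [withDensity_ite_openSimplex_apply, univ_inter, volume_openSimplex] at this
    simp [Nat.factorial_ne_zero] at this
  have hB : MeasurableSet
      {z : Fin n → ℝ | (∀ i ∈ S, z i ≤ x) ∧ (∀ i ∈ Sᶜ, x < z i) ∧ ∑ i, z i < y} := by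
    measurability
  rw [setOf_spacings_eq_preimage G hj, ← Measure.map_apply_of_aemeasurable hmeas hB, hdens,
    withDensity_ite_openSimplex_apply, setOf_inter_openSimplex _ _ _ hy.2, ENNReal.toReal_mul,
    ENNReal.toReal_natCast, volume_simplexCut_eq disjoint_compl_right hx.1.le,
    volume_simplexCut_toReal (by omega) _ hx.1.le, card_compl, Fintype.card_fin, hS, mul_sum,
    ← sum_range_reflect]
  refine sum_congr rfl fun k hk => ?_
  have hkj : k ≤ j := Nat.lt_succ_iff.mp (mem_range.mp hk)
  rw [Nat.add_sub_cancel, Nat.choose_symm hkj, Nat.cast_sub hj, Nat.cast_sub hkj,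
    show y - (n - j) * x - (j - k) * x = y - (n - k) * x by ring]
  field_simp

/-- If `G₁,…,Gₙ` have joint density `n!` on `{z : zᵢ > 0, ∑ zᵢ < 1}`, then for
`j ∈ {0,…,n}`, `x ∈ (0,1)`, `y ∈ (0,1]`,
`P(Gᵢ ≤ x ∀ i ≤ j, Gᵢ > x ∀ j < i ≤ n, ∑ Gᵢ < y) = ∑_{r=0}^j (-1)^{j-r} C(j,r) (y-(n-r)x)₊ⁿ`. -/
theorem spacings_partial_probability
    {Ω : Type} [MeasurableSpace Ω] (P : Measure Ω) [IsProbabilityMeasure P]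
    (n : ℕ) (hn : 1 ≤ n) (G : ℕ → Ω → ℝ)
    (hdens : Measure.map (fun ω => fun i : Fin n => G ((i : ℕ) + 1) ω) P
      = (volume : Measure (Fin n → ℝ)).withDensity
          (fun z => if (∀ i, 0 < z i) ∧ ∑ i, z i < 1 then (Nat.factorial n : ℝ≥0∞) else 0))
    (j : ℕ) (hj : j ≤ n) (x : ℝ) (hx : x ∈ Set.Ioo (0 : ℝ) 1) (y : ℝ)
    (hy : y ∈ Set.Ioc (0 : ℝ) 1) :
    (P {ω | (∀ i, 1 ≤ i → i ≤ j → G i ω ≤ x) ∧ (∀ i, j < i → i ≤ n → x < G i ω)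
        ∧ ∑ i ∈ Finset.Icc 1 n, G i ω < y}).toReal
      = ∑ r ∈ Finset.range (j + 1),
          (-1 : ℝ) ^ (j - r) * (Nat.choose j r) * (max 0 (y - ((n : ℝ) - r) * x)) ^ n :=
  spacings_partial_probability_general P n hn G hdens j hj x hx y hy
end

section
/- For integers n ≥ 1, j ∈ {1,...,n}, and r ∈ {0,...,n}: ((n+1)/(n-r+1)) · (C(n,j)C(j,r) + C(n,j-1)C(j-1,r)) = C(n+1,j)C(j,r). -/
/-!
Absorption, `(n + 1) C(n, k) = (n + 1 - k) C(n + 1, k)` and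
`(n + 1) C(n, k) = (k + 1) C(n + 1, k + 1)`, rewrites both summands on the left as multiples of `C(n + 1, j)`, leaving
`(n + 1 - j) C(j, r) + j C(j - 1, r)`; absorption once more turns `j C(j - 1, r)` into
`(j - r) C(j, r)`, so the bracket is `(n + 1 - r) C(j, r)`.
-/

namespace Nat

variable {R : Type*} [CommRing R]

theorem cast_add_one_mul_choose (n k : ℕ) :
    ((n : R) + 1) * n.choose k = ((n : R) + 1 - k) * (n + 1).choose k := by
  rcases le_or_gt k (n + 1) with hk | hk
  · have h := congrArg (Nat.cast : ℕ → R) (choose_mul_succ_eq n k)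
    push_cast [hk] at h
    linear_combination h
  · rw [choose_eq_zero_of_lt hk, choose_eq_zero_of_lt (by omega : n < k)]
    simp

theorem cast_add_one_mul_choose_add_choose_mul_choose (n k r : ℕ) :
    ((n : R) + 1) * (n.choose (k + 1) * (k + 1).choose r + n.choose k * k.choose r)
      = ((n : R) + 1 - r) * ((n + 1).choose (k + 1) * (k + 1).choose r) := by
  have h₁ : ((n : R) + 1) * n.choose (k + 1) = ((n : R) - k) * (n + 1).choose (k + 1) := by
    rw [cast_add_one_mul_choose]; push_cast; ring
  have h₂ := congrArg (Nat.cast : ℕ → R) (add_one_mul_choose_eq n k)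
  have h₃ := cast_add_one_mul_choose (R := R) k r
  push_cast at h₂ h₃
  linear_combination (k + 1).choose r * h₁ + k.choose r * h₂ + (n + 1).choose (k + 1) * h₃

end Nat

theorem binomial_identity_general (n j r : ℕ) (hj1 : 1 ≤ j) (hr : r ≤ n) :
    ((n : ℝ) + 1) / ((n : ℝ) - r + 1)
        * ((Nat.choose n j * Nat.choose j r : ℕ)
            + (Nat.choose n (j - 1) * Nat.choose (j - 1) r : ℕ))
      = (Nat.choose (n + 1) j * Nat.choose j r : ℕ) := by
  obtain ⟨k, rfl⟩ := Nat.exists_eq_add_of_le' hj1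
  have hpos : (0 : ℝ) < n - r + 1 := by
    have : (r : ℝ) ≤ n := by exact_mod_cast hr
    linarith
  rw [div_mul_eq_mul_div, div_eq_iff hpos.ne', Nat.add_sub_cancel]
  push_cast
  linear_combination Nat.cast_add_one_mul_choose_add_choose_mul_choose (R := ℝ) n k r

/-- For `n ≥ 1`, `1 ≤ j ≤ n`, `0 ≤ r ≤ n`:
`((n+1)/(n-r+1)) (C(n,j)C(j,r) + C(n,j-1)C(j-1,r)) = C(n+1,j)C(j,r)`. -/
theorem binomial_identity (n j r : ℕ) (hn : 1 ≤ n) (hj1 : 1 ≤ j) (hj2 : j ≤ n) (hr : r ≤ n) :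
    ((n : ℝ) + 1) / ((n : ℝ) - r + 1)
        * ((Nat.choose n j * Nat.choose j r : ℕ)
            + (Nat.choose n (j - 1) * Nat.choose (j - 1) r : ℕ))
      = (Nat.choose (n + 1) j * Nat.choose j r : ℕ) :=
  binomial_identity_general n j r hj1 hr
end

section
/- For positive reals t_1,...,t_{n+1}, the integral of exp(-t_1 x_1 - ... - t_{n+1} x_{n+1}) over the simplex {0 < x_1 < ... < x_{n+1}} equals 1/(t_{n+1}(t_{n+1}+t_n)···(t_{n+1}+t_n+...+t_1)). -/
/-!
Write a point of the simplex as the partial sums `x_i = y_1 + ⋯ + y_i` of its increments. This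
change of variables is linear with a unipotent lower-triangular matrix, so it preserves Lebesgue
measure; it maps the positive orthant onto the simplex and turns `∑ tᵢ xᵢ` into
`∑ⱼ (tⱼ + ⋯ + t_{n+1}) yⱼ`. The integral then factors into one-dimensional integrals
`∫₀^∞ exp (-s y) dy = 1 / s`.
-/

open MeasureTheory Finset

theorem integral_exp_neg_mul_Ioi_zero {s : ℝ} (hs : 0 < s) :
    ∫ x in Set.Ioi (0 : ℝ), Real.exp (-(s * x)) = s⁻¹ := by
  simpa [neg_mul] using integral_exp_mul_Ioi (neg_lt_zero.mpr hs) 0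

theorem setIntegral_univ_pi_Ioi_exp_neg_sum {ι : Type*} [Fintype ι] (s : ι → ℝ)
    (hs : ∀ i, 0 < s i) :
    ∫ y in Set.univ.pi fun _ => Set.Ioi (0 : ℝ), Real.exp (-∑ i, s i * y i) = (∏ i, s i)⁻¹ := by
  simp_rw [← sum_neg_distrib, Real.exp_sum]
  rw [volume_pi, Measure.restrict_pi_pi,
    integral_fintype_prod_eq_prod (fun i x => Real.exp (-(s i * x))), ← prod_inv_distrib]
  exact prod_congr rfl fun i _ => integral_exp_neg_mul_Ioi_zero (hs i)

section PartialSums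

variable {ι : Type*} [Fintype ι] [LinearOrder ι]

def partialSumMatrix : Matrix ι ι ℝ := Matrix.of fun i j => if j ≤ i then 1 else 0

theorem det_partialSumMatrix : (partialSumMatrix : Matrix ι ι ℝ).det = 1 := by
  rw [Matrix.det_of_isLowerTriangular]
  · simp [partialSumMatrix]
  · intro i j (hij : i < j)
    simp [partialSumMatrix, hij]

def partialSums : (ι → ℝ) →ₗ[ℝ] ι → ℝ := Matrix.toLin' partialSumMatrix

theorem partialSums_apply (y : ι → ℝ) (i : ι) : partialSums y i = ∑ j with j ≤ i, y j := by
  simp [partialSums, partialSumMatrix, Matrix.mulVec, dotProduct, sum_filter]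

theorem measurePreserving_partialSums : MeasurePreserving (partialSums (ι := ι)) := by
  classical
  refine ⟨(partialSums (ι := ι)).continuous_of_finiteDimensional.measurable, ?_⟩
  rw [partialSums, Real.map_matrix_volume_pi_eq_smul_volume_pi (by simp [det_partialSumMatrix])]
  simp [det_partialSumMatrix]

theorem measurableEmbedding_partialSums : MeasurableEmbedding (partialSums (ι := ι)) := by
  have hdet : LinearMap.det (partialSums (ι := ι)) ≠ 0 := by
    simp [partialSums, LinearMap.det_toLin', det_partialSumMatrix]
  exact (partialSums.equivOfDetNeZero hdet).toContinuousLinearEquiv.toHomeomorph.measurableEmbedding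

theorem sum_mul_partialSums (t y : ι → ℝ) :
    ∑ i, t i * partialSums y i = ∑ j, (∑ i with j ≤ i, t i) * y j := by
  simp_rw [partialSums_apply, mul_sum, sum_mul, sum_filter]
  rw [sum_comm]

end PartialSums

theorem partialSums_fin_zero {n : ℕ} (y : Fin (n + 1) → ℝ) : partialSums y 0 = y 0 := by
  simp [partialSums_apply, sum_filter]

theorem partialSums_fin_succ {n : ℕ} (y : Fin (n + 1) → ℝ) (j : Fin n) :
    partialSums y j.succ = partialSums y j.castSucc + y j.succ := by
  have hIic : univ.filter (fun k : Fin (n + 1) => k ≤ j.succ) =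
      insert j.succ (univ.filter (· ≤ j.castSucc)) := by
    ext k
    simp only [mem_insert, mem_filter, mem_univ, true_and, Fin.le_castSucc_iff]
    exact le_iff_eq_or_lt
  rw [partialSums_apply, partialSums_apply, hIic, sum_insert (by simp), add_comm]

theorem preimage_partialSums_simplex (n : ℕ) :
    partialSums ⁻¹' {x : Fin (n + 1) → ℝ | 0 < x 0 ∧ StrictMono x} =
      Set.univ.pi fun _ => Set.Ioi 0 := by
  ext y
  simp only [Set.mem_preimage, Set.mem_ofPred_eq, Fin.strictMono_iff_lt_succ,
    partialSums_fin_zero, partialSums_fin_succ, lt_add_iff_pos_right, Set.mem_univ_pi, Set.mem_Ioi]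
  exact ⟨fun ⟨h0, hsucc⟩ i => Fin.cases h0 hsucc i, fun h => ⟨h 0, fun j => h j.succ⟩⟩

/-- For positive reals `t₁,…,t_{n+1}`, the integral of `exp(-∑ tᵢ xᵢ)` over the simplex
`{0 < x₁ < ⋯ < x_{n+1}}` equals `1/∏_{k=1}^{n+1} (t_{n+1} + ⋯ + t_k)`. -/
theorem integral_exp_over_simplex (n : ℕ) (t : Fin (n + 1) → ℝ) (ht : ∀ i, 0 < t i) :
    ∫ x in {x : Fin (n + 1) → ℝ | 0 < x 0 ∧ StrictMono x},
        Real.exp (-∑ i, t i * x i) ∂(volume : Measure (Fin (n + 1) → ℝ))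
      = 1 / ∏ k : Fin (n + 1), ∑ j ∈ Finset.univ.filter (fun j => k ≤ j), t j := by
  have hpos : ∀ k, 0 < ∑ j with k ≤ j, t j := fun k => sum_pos (fun j _ => ht j) ⟨k, by simp⟩
  rw [← measurePreserving_partialSums.setIntegral_preimage_emb measurableEmbedding_partialSums,
    preimage_partialSums_simplex]
  simp_rw [sum_mul_partialSums]
  rw [setIntegral_univ_pi_Ioi_exp_neg_sum _ hpos, one_div]
end
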